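/- arXiv:0905.4567 — 3 statements merged into one kernel-verified Lean document; each statement's English description precedes it below -/
import Mathlib

section
/- Probabilities of successive measurements on distinct qubits satisfy the exchange identity: for r ≠ q in QV, c, d ∈ {0,1}, and a quantum register Q ∈ H(QV), let p_{r,c} = ⟨Q, M_{r,c}†M_{r,c}Q⟩, p_{q,d} = ⟨Q, M_{q,d}†M_{q,d}Q⟩, and let Q_{r,c}, Q_{q,d} be the normalized post-measurement states (defined as M̄_{r,c}(Q), M̄_{q,d}(Q)); let s_{q,d} = ⟨Q_{r,c}, M_{q,d}†M_{q,d}Q_{r,c}⟩ and s_{r,c} = ⟨Q_{q,d}, M_{r,c}†M_{r,c}Q_{q,d}⟩. Then p_{r,c} · s_{q,d} = p_{q,d} · s_{r,c}. -/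
open Finset

variable {V : Type*} [DecidableEq V]

abbrev H (QV : Finset V) := EuclideanSpace ℂ (↥QV → Bool)

def extFun (QV : Finset V) (r : V) (c : Bool) (g : ↥(QV.erase r) → Bool) (x : ↥QV) : Bool :=
  if h : (x : V) = r then c else g ⟨x, Finset.mem_erase.mpr ⟨h, x.2⟩⟩

noncomputable def measL (QV : Finset V) (r : V) (c : Bool) :
    H QV →ₗ[ℂ] H (QV.erase r) where
  toFun Q := WithLp.toLp 2 (fun g => Q (extFun QV r c g))
  map_add' Q R := rfl
  map_smul' a Q := rfl

/-- The probability of observing outcome `c` when measuring qubit `r` in `Q`. -/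
noncomputable def prob (QV : Finset V) (r : V) (c : Bool) (Q : H QV) : ℝ :=
  (inner (𝕜 := ℂ) Q ((LinearMap.adjoint (measL QV r c)) (measL QV r c Q))).re

/-- The normalized destructive measurement. -/
noncomputable def nmeas (QV : Finset V) (r : V) (c : Bool) (Q : H QV) :
    H (QV.erase r) :=
  if prob QV r c Q = 0 then measL QV r c Q
  else ((Real.sqrt (prob QV r c Q) : ℂ))⁻¹ • measL QV r c Q

/-
Both sides equal the squared norm of the twice-measured vector. First,
`p_{r,c} · s_{q,d} = ‖M_{q,d} M_{r,c} Q‖²`, since the normalization divides `M_{r,c} Q` by its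
norm `√p_{r,c}` (and when `p_{r,c} = 0` both sides vanish). Second, measurements on distinct
qubits commute up to relabelling the remaining qubits: both `M_{q,d} M_{r,c} Q` and
`M_{r,c} M_{q,d} Q` list the amplitudes of `Q` on the basis states with `r ↦ c` and `q ↦ d`.
-/

lemma norm_sq_mul_norm_sq_map_inv_norm_smul {𝕜 E F : Type*} [RCLike 𝕜]
    [NormedAddCommGroup E] [NormedSpace 𝕜 E] [NormedAddCommGroup F] [NormedSpace 𝕜 F]
    (B : E →ₗ[𝕜] F) (x : E) :
    ‖x‖ ^ 2 * ‖B ((‖x‖ : 𝕜)⁻¹ • x)‖ ^ 2 = ‖B x‖ ^ 2 := by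
  rcases eq_or_ne x 0 with rfl | hx
  · simp
  · have hx' : ‖x‖ ≠ 0 := norm_ne_zero_iff.mpr hx
    rw [map_smul, norm_smul, norm_inv, RCLike.norm_ofReal, abs_norm]
    field_simp

lemma prob_eq_norm_sq (QV : Finset V) (r : V) (c : Bool) (Q : H QV) :
    prob QV r c Q = ‖measL QV r c Q‖ ^ 2 := by
  rw [prob, LinearMap.adjoint_inner_right]
  exact inner_self_eq_norm_sq (𝕜 := ℂ) _

lemma nmeas_eq_inv_norm_smul (QV : Finset V) (r : V) (c : Bool) (Q : H QV) :
    nmeas QV r c Q = ((‖measL QV r c Q‖ : ℂ))⁻¹ • measL QV r c Q := by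
  rw [nmeas, prob_eq_norm_sq, Real.sqrt_sq (norm_nonneg _)]
  split_ifs with h
  · simp [norm_eq_zero.mp (pow_eq_zero_iff two_ne_zero |>.mp h)]
  · rfl

lemma prob_mul_prob_nmeas (QV : Finset V) (r q : V) (c d : Bool) (Q : H QV) :
    prob QV r c Q * prob (QV.erase r) q d (nmeas QV r c Q)
      = ‖measL (QV.erase r) q d (measL QV r c Q)‖ ^ 2 := by
  rw [prob_eq_norm_sq, prob_eq_norm_sq, nmeas_eq_inv_norm_smul]
  exact norm_sq_mul_norm_sq_map_inv_norm_smul (𝕜 := ℂ) _ _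

def eraseCommEquiv (QV : Finset V) (r q : V) :
    ↥((QV.erase r).erase q) ≃ ↥((QV.erase q).erase r) :=
  Equiv.subtypeEquivRight fun x => by rw [Finset.erase_right_comm]

lemma extFun_extFun_comm (QV : Finset V) (r q : V) (hrq : r ≠ q) (c d : Bool)
    (g : ↥((QV.erase r).erase q) → Bool) :
    extFun QV r c (extFun (QV.erase r) q d g)
      = extFun QV q d (extFun (QV.erase q) r c (g ∘ (eraseCommEquiv QV r q).symm)) := by
  funext x
  by_cases hxr : (x : V) = r
  · simp [extFun, hxr, hrq]
  · by_cases hxq : (x : V) = q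
    · simp [extFun, hxq, hrq.symm]
    · simp only [extFun, hxr, ↓reduceDIte, hxq, Function.comp_apply]
      rfl

lemma norm_measL_measL_comm (QV : Finset V) (r q : V) (hrq : r ≠ q) (c d : Bool) (Q : H QV) :
    ‖measL (QV.erase r) q d (measL QV r c Q)‖ = ‖measL (QV.erase q) r c (measL QV q d Q)‖ := by
  simp only [EuclideanSpace.norm_eq]
  congr 1
  refine Fintype.sum_equiv ((eraseCommEquiv QV r q).arrowCongr (Equiv.refl Bool)) _ _ fun g => ?_
  change ‖Q (extFun QV r c (extFun (QV.erase r) q d g))‖ ^ 2 = _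
  rw [extFun_extFun_comm QV r q hrq]
  rfl

theorem prob_exchange_general (QV : Finset V) (r q : V) (hrq : r ≠ q)
    (c d : Bool) (Q : H QV) :
    prob QV r c Q * prob (QV.erase r) q d (nmeas QV r c Q)
      = prob QV q d Q * prob (QV.erase q) r c (nmeas QV q d Q) := by
  rw [prob_mul_prob_nmeas, prob_mul_prob_nmeas, norm_measL_measL_comm QV r q hrq]

/-- Probabilities of successive measurements on distinct qubits satisfy the
exchange identity `p_{r,c} · s_{q,d} = p_{q,d} · s_{r,c}`. -/
theorem prob_exchange (QV : Finset V) (r q : V) (hr : r ∈ QV) (hq : q ∈ QV) (hrq : r ≠ q)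
    (c d : Bool) (Q : H QV) (hreg : Q = 0 ∨ ‖Q‖ = 1) :
    prob QV r c Q * prob (QV.erase r) q d (nmeas QV r c Q)
      = prob QV q d Q * prob (QV.erase q) r c (nmeas QV q d Q) :=
  prob_exchange_general QV r q hrq c d Q
end

section
/- For an abstract probabilistic rewriting system with one-step rules: deterministic steps a → b and binary probabilistic branchings a →_p b, a →_q c with p + q = 1, satisfying the quasi-diamond properties of Q* (deterministic/deterministic steps close in one step or coincide; deterministic and probabilistic steps commute; two probabilistic branchings on distinct redexes commute with matching products of probabilities), any two maximal finite computation trees from the same root assign the same probability to each normal form. -/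
attribute [local instance] Classical.propDecidable

/-- Finite probabilistic computations: a leaf `[C]`, a unary node `[C, T]`, or a
binary probabilistic node `[(p, q, C), T₁, T₂]`. -/
inductive FT (σ : Type) : Type
  | leaf : σ → FT σ
  | one : σ → FT σ → FT σ
  | two : ℝ → ℝ → σ → FT σ → FT σ → FT σ

variable {σ : Type}

/-- The root of a finite probabilistic computation. -/
def FT.root : FT σ → σ
  | .leaf c => c
  | .one c _ => c
  | .two _ _ c _ _ => c

/-- Validity of a finite probabilistic computation with respect to a deterministic
step relation `det` and a probabilistic branching relation `branch`
(`branch c (p, d) (q, e)` means `c` branches into `d` with probability `p` and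
into `e` with probability `q`). -/
inductive FT.Valid (det : σ → σ → Prop) (branch : σ → ℝ × σ → ℝ × σ → Prop) :
    FT σ → Prop
  | leaf (c : σ) : FT.Valid det branch (.leaf c)
  | one {c : σ} {T : FT σ} : det c T.root → FT.Valid det branch T →
      FT.Valid det branch (.one c T)
  | two {p q : ℝ} {c : σ} {T₁ T₂ : FT σ} :
      branch c (p, T₁.root) (q, T₂.root) →
      FT.Valid det branch T₁ → FT.Valid det branch T₂ →
      FT.Valid det branch (.two p q c T₁ T₂)

/-- The probability of observing `C` as a leaf of a finite computation. -/
noncomputable def FT.Pr (C : σ) : FT σ → ℝ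
  | .leaf d => if d = C then 1 else 0
  | .one _ T => T.Pr C
  | .two p q _ T₁ T₂ => p * T₁.Pr C + q * T₂.Pr C

/-- The number of leaves of a finite computation equal to `C` (in `ℕ ∪ {ℵ₀}`). -/
noncomputable def FT.Nc (C : σ) : FT σ → ℕ∞
  | .leaf d => if d = C then 1 else 0
  | .one _ T => T.Nc C
  | .two _ _ _ T₁ T₂ => T₁.Nc C + T₂.Nc C

/-- The probability of observing any normal form as a leaf of a finite computation. -/
noncomputable def FT.PrAny (NF : σ → Prop) : FT σ → ℝ
  | .leaf d => if NF d then 1 else 0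
  | .one _ T => T.PrAny NF
  | .two p q _ T₁ T₂ => p * T₁.PrAny NF + q * T₂.PrAny NF

/-- The number of normal-form leaves of a finite computation (in `ℕ ∪ {ℵ₀}`). -/
noncomputable def FT.NAny (NF : σ → Prop) : FT σ → ℕ∞
  | .leaf d => if NF d then 1 else 0
  | .one _ T => T.NAny NF
  | .two _ _ _ T₁ T₂ => T₁.NAny NF + T₂.NAny NF

/-- A finite probabilistic computation is maximal if all its leaves are normal forms. -/
def FT.Maximal (NF : σ → Prop) : FT σ → Prop
  | .leaf c => NF c
  | .one _ T => T.Maximal NF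
  | .two _ _ _ T₁ T₂ => T₁.Maximal NF ∧ T₂.Maximal NF

/-- A state is in normal form when no reduction step applies to it. -/
def IsNF (det : σ → σ → Prop) (branch : σ → ℝ × σ → ℝ × σ → Prop) (c : σ) : Prop :=
  (∀ d, ¬ det c d) ∧ ∀ x y, ¬ branch c x y

/-! Strong confluence is proved by induction on the second tree `R`. A step from the common
root (deterministic or probabilistic) is pushed through the first tree `P` by the
quasi-diamond properties, giving maximal trees from the successors that observe every
normal form with the same probability as `P`; the induction hypothesis then compares them
with the subtrees of `R`. -/

section QuasiDiamond

variable (det : σ → σ → Prop) (branch : σ → ℝ × σ → ℝ × σ → Prop)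

def DetDiamond : Prop :=
  ∀ a b c, det a b → det a c → b = c ∨ ∃ d, det b d ∧ det c d

def DetBranchCommute : Prop :=
  ∀ a b p c q d, det a b → branch a (p, c) (q, d) →
    ∃ c' d', branch b (p, c') (q, d') ∧ det c c' ∧ det d d'

/-- Two branchings of the same state coincide, or are closed by branchings `d i j` whose
path probabilities agree: reaching `d i j` through the `i`-th branch of the first
branching has the same probability as through the `j`-th branch of the second. -/
def BranchDiamond : Prop :=
  ∀ a p₀ b₀ p₁ b₁ s₀ c₀ s₁ c₁,
    branch a (p₀, b₀) (p₁, b₁) → branch a (s₀, c₀) (s₁, c₁) →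
    ((p₀, b₀) = (s₀, c₀) ∧ (p₁, b₁) = (s₁, c₁)) ∨
    ∃ (d : Bool → Bool → σ) (t u : Bool → Bool → ℝ),
      branch b₀ (t false false, d false false) (t false true, d false true) ∧
      branch b₁ (t true false, d true false) (t true true, d true true) ∧
      branch c₀ (u false false, d false false) (u true false, d true false) ∧
      branch c₁ (u false true, d false true) (u true true, d true true) ∧
      ∀ i j, (bif i then p₁ else p₀) * t i j = (bif j then s₁ else s₀) * u i j

def FT.IsMaximalFrom (a : σ) (P : FT σ) : Prop :=
  P.Valid det branch ∧ P.Maximal (IsNF det branch) ∧ P.root = a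

variable {det branch}

theorem FT.Valid.eq_leaf_of_isNF_root {P : FT σ} (hv : P.Valid det branch)
    (hNF : IsNF det branch P.root) : P = .leaf P.root := by
  cases hv with
  | leaf => rfl
  | one hstep => exact absurd hstep (hNF.1 _)
  | two hbr => exact absurd hbr (hNF.2 _ _)

theorem FT.Valid.exists_isMaximalFrom_of_det (hdd : DetDiamond det)
    (hdp : DetBranchCommute det branch) {P : FT σ} (hv : P.Valid det branch)
    (hm : P.Maximal (IsNF det branch)) {b : σ} (hb : det P.root b) :
    ∃ P' : FT σ, P'.IsMaximalFrom det branch b ∧ ∀ C, P'.Pr C = P.Pr C := by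
  induction hv generalizing b with
  | leaf c => exact absurd hb (hm.1 b)
  | @one c T hstep hvT ih =>
    rcases hdd c T.root b hstep hb with rfl | ⟨d, hTd, hbd⟩
    · exact ⟨T, ⟨hvT, hm, rfl⟩, fun _ => rfl⟩
    · obtain ⟨T', ⟨hvT', hmT', rfl⟩, hPr⟩ := ih hm hTd
      exact ⟨.one b T', ⟨.one hbd hvT', hmT', rfl⟩, hPr⟩
  | @two p q c T₁ T₂ hbr _ _ ih₁ ih₂ =>
    obtain ⟨c₁, c₂, hbr', hc₁, hc₂⟩ := hdp c b p T₁.root q T₂.root hb hbr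
    obtain ⟨T₁', ⟨hvT₁', hmT₁', rfl⟩, hPr₁⟩ := ih₁ hm.1 hc₁
    obtain ⟨T₂', ⟨hvT₂', hmT₂', rfl⟩, hPr₂⟩ := ih₂ hm.2 hc₂
    refine ⟨.two p q b T₁' T₂', ⟨.two hbr' hvT₁' hvT₂', ⟨hmT₁', hmT₂'⟩, rfl⟩, fun C => ?_⟩
    simp only [FT.Pr, hPr₁, hPr₂]

theorem FT.Valid.exists_isMaximalFrom_of_branch (hdp : DetBranchCommute det branch)
    (hpp : BranchDiamond branch) {P : FT σ} (hv : P.Valid det branch)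
    (hm : P.Maximal (IsNF det branch)) {p q : ℝ} {b c : σ}
    (hbc : branch P.root (p, b) (q, c)) :
    ∃ Pb Pc : FT σ, Pb.IsMaximalFrom det branch b ∧ Pc.IsMaximalFrom det branch c ∧
      ∀ C, P.Pr C = p * Pb.Pr C + q * Pc.Pr C := by
  induction hv generalizing p q b c with
  | leaf a => exact absurd hbc (hm.2 _ _)
  | @one a T hstep _ ih =>
    obtain ⟨b', c', hbr', hb, hc⟩ := hdp a T.root p b q c hstep hbc
    obtain ⟨Tb, Tc, ⟨hvTb, hmTb, rfl⟩, ⟨hvTc, hmTc, rfl⟩, hPr⟩ := ih hm hbr'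
    exact ⟨.one b Tb, .one c Tc, ⟨.one hb hvTb, hmTb, rfl⟩, ⟨.one hc hvTc, hmTc, rfl⟩, hPr⟩
  | @two p₀ p₁ a T₀ T₁ hbr hv₀ hv₁ ih₀ ih₁ =>
    rcases hpp a p₀ T₀.root p₁ T₁.root p b q c hbr hbc with
      ⟨h₀, h₁⟩ | ⟨d, t, u, hb₀, hb₁, hcb, hcc, hprob⟩
    · obtain ⟨rfl, rfl⟩ := Prod.mk.inj h₀
      obtain ⟨rfl, rfl⟩ := Prod.mk.inj h₁
      exact ⟨T₀, T₁, ⟨hv₀, hm.1, rfl⟩, ⟨hv₁, hm.2, rfl⟩, fun _ => rfl⟩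
    · obtain ⟨S₀₀, S₀₁, ⟨hv₀₀, hm₀₀, hr₀₀⟩, ⟨hv₀₁, hm₀₁, hr₀₁⟩, hPr₀⟩ := ih₀ hm.1 hb₀
      obtain ⟨S₁₀, S₁₁, ⟨hv₁₀, hm₁₀, hr₁₀⟩, ⟨hv₁₁, hm₁₁, hr₁₁⟩, hPr₁⟩ := ih₁ hm.2 hb₁
      refine ⟨.two (u false false) (u true false) b S₀₀ S₁₀,
        .two (u false true) (u true true) c S₀₁ S₁₁,
        ⟨.two (hr₀₀ ▸ hr₁₀ ▸ hcb) hv₀₀ hv₁₀, ⟨hm₀₀, hm₁₀⟩, rfl⟩,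
        ⟨.two (hr₀₁ ▸ hr₁₁ ▸ hcc) hv₀₁ hv₁₁, ⟨hm₀₁, hm₁₁⟩, rfl⟩,
        fun C => ?_⟩
      have e₀₀ := hprob false false
      have e₀₁ := hprob false true
      have e₁₀ := hprob true false
      have e₁₁ := hprob true true
      simp only [Bool.cond_false, Bool.cond_true] at e₀₀ e₀₁ e₁₀ e₁₁
      simp only [FT.Pr, hPr₀, hPr₁]
      linear_combination S₀₀.Pr C * e₀₀ + S₀₁.Pr C * e₀₁ + S₁₀.Pr C * e₁₀ + S₁₁.Pr C * e₁₁

end QuasiDiamond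

theorem finite_strong_confluence_general
    (det : σ → σ → Prop) (branch : σ → ℝ × σ → ℝ × σ → Prop)
    (hdd : ∀ a b c, det a b → det a c → b = c ∨ ∃ d, det b d ∧ det c d)
    (hdp : ∀ a b p c q d, det a b → branch a (p, c) (q, d) →
      ∃ c' d', branch b (p, c') (q, d') ∧ det c c' ∧ det d d')
    (hpp : ∀ a p₀ b₀ p₁ b₁ s₀ c₀ s₁ c₁,
      branch a (p₀, b₀) (p₁, b₁) → branch a (s₀, c₀) (s₁, c₁) →
      ((p₀, b₀) = (s₀, c₀) ∧ (p₁, b₁) = (s₁, c₁)) ∨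
      ∃ (d : Bool → Bool → σ) (t u : Bool → Bool → ℝ),
        branch b₀ (t false false, d false false) (t false true, d false true) ∧
        branch b₁ (t true false, d true false) (t true true, d true true) ∧
        branch c₀ (u false false, d false false) (u true false, d true false) ∧
        branch c₁ (u false true, d false true) (u true true, d true true) ∧
        ∀ i j, (bif i then p₁ else p₀) * t i j = (bif j then s₁ else s₀) * u i j)
    (P R : FT σ)
    (hvP : P.Valid det branch) (hvR : R.Valid det branch)
    (hmP : P.Maximal (IsNF det branch)) (hmR : R.Maximal (IsNF det branch))
    (hroot : P.root = R.root)
    (C : σ) :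
    FT.Pr C P = FT.Pr C R := by
  induction hvR generalizing P with
  | leaf d =>
    rw [hvP.eq_leaf_of_isNF_root (hroot ▸ hmR), hroot]
    rfl
  | @one d T hstep _ ih =>
    obtain ⟨P', ⟨hvP', hmP', hrP'⟩, hPr⟩ :=
      hvP.exists_isMaximalFrom_of_det hdd hdp hmP (by rwa [hroot])
    rw [← hPr, ih P' hvP' hmP' hmR hrP']
    rfl
  | @two p q d T₁ T₂ hbr _ _ ih₁ ih₂ =>
    obtain ⟨Pb, Pc, ⟨hvPb, hmPb, hrPb⟩, ⟨hvPc, hmPc, hrPc⟩, hPr⟩ :=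
      hvP.exists_isMaximalFrom_of_branch hdp hpp hmP (by rwa [hroot])
    rw [hPr, ih₁ Pb hvPb hmPb hmR.1 hrPb, ih₂ Pc hvPc hmPc hmR.2 hrPc]
    rfl

/-- Strong confluence for an abstract probabilistic rewriting system satisfying the
quasi-diamond properties of Q*: any two maximal finite computation trees from the
same root assign the same probability to each normal form. -/
theorem finite_strong_confluence
    (det : σ → σ → Prop) (branch : σ → ℝ × σ → ℝ × σ → Prop)
    (hsum : ∀ a p b q c, branch a (p, b) (q, c) → 0 ≤ p ∧ 0 ≤ q ∧ p + q = 1)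
    (hdd : ∀ a b c, det a b → det a c → b = c ∨ ∃ d, det b d ∧ det c d)
    (hdp : ∀ a b p c q d, det a b → branch a (p, c) (q, d) →
      ∃ c' d', branch b (p, c') (q, d') ∧ det c c' ∧ det d d')
    (hpp : ∀ a p₀ b₀ p₁ b₁ s₀ c₀ s₁ c₁,
      branch a (p₀, b₀) (p₁, b₁) → branch a (s₀, c₀) (s₁, c₁) →
      ((p₀, b₀) = (s₀, c₀) ∧ (p₁, b₁) = (s₁, c₁)) ∨
      ∃ (d : Bool → Bool → σ) (t u : Bool → Bool → ℝ),
        branch b₀ (t false false, d false false) (t false true, d false true) ∧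
        branch b₁ (t true false, d true false) (t true true, d true true) ∧
        branch c₀ (u false false, d false false) (u true false, d true false) ∧
        branch c₁ (u false true, d false true) (u true true, d true true) ∧
        ∀ i j, (bif i then p₁ else p₀) * t i j = (bif j then s₁ else s₀) * u i j)
    (P R : FT σ)
    (hvP : P.Valid det branch) (hvR : R.Valid det branch)
    (hmP : P.Maximal (IsNF det branch)) (hmR : R.Maximal (IsNF det branch))
    (hroot : P.root = R.root)
    (C : σ) (hC : IsNF det branch C) :
    FT.Pr C P = FT.Pr C R :=
  finite_strong_confluence_general det branch hdd hdp hpp P R hvP hvR hmP hmR hroot C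
end

section
/- Strong confluence of probabilistic computations: for any two maximal probabilistic computations P and R with the same root configuration, and for every normal form C, the probabilities P(P,C) = P(R,C) and leaf counts N(P,C) = N(R,C) coincide; moreover P_any(P) = P_any(R) and N_any(P) = N_any(R). -/
attribute [local instance] Classical.propDecidable

variable {σ : Type}

/-- Possibly infinite probabilistic computations, represented by their (partial)
labelling of tree positions (lists of booleans: `false` = first/left child,
`true` = right child) together with the pair of probabilities decorating each
binary (measurement) node. -/
structure PT (σ : Type) where
  label : List Bool → Option σ
  pr : List Bool → Option (ℝ × ℝ)

/-- The immediate subtree of a possibly infinite computation in direction `b`. -/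
def PT.child (T : PT σ) (b : Bool) : PT σ :=
  ⟨fun l => T.label (b :: l), fun l => T.pr (b :: l)⟩

/-- Validity of a possibly infinite probabilistic computation: every defined node
either is a leaf, or has exactly one child reached by a `det` step, or is a binary
node whose two children are reached by a probabilistic branching. -/
structure PT.Valid (det : σ → σ → Prop) (branch : σ → ℝ × σ → ℝ × σ → Prop)
    (T : PT σ) : Prop where
  root_isSome : (T.label []).isSome
  none_child : ∀ l, T.label l = none →
    T.label (l ++ [false]) = none ∧ T.label (l ++ [true]) = none ∧ T.pr l = none
  right_imp_left : ∀ l, (T.label (l ++ [true])).isSome → (T.label (l ++ [false])).isSome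
  det_step : ∀ l c d, T.label l = some c → T.label (l ++ [false]) = some d →
    T.label (l ++ [true]) = none → T.pr l = none ∧ det c d
  branch_step : ∀ l c, T.label l = some c → (T.pr l).isSome →
    ∃ p q d e, T.pr l = some (p, q) ∧ T.label (l ++ [false]) = some d ∧
      T.label (l ++ [true]) = some e ∧ branch c (p, d) (q, e)
  pr_of_two : ∀ l, (T.label (l ++ [true])).isSome → (T.pr l).isSome

/-- A possibly infinite computation is maximal if every leaf is a normal form. -/
def PT.Maximal (NF : σ → Prop) (T : PT σ) : Prop :=
  ∀ l c, T.label l = some c → T.label (l ++ [false]) = none → NF c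

/-- The sub-computation relation `F ⊑ T`: the finite computation `F` is a finite
truncation of the possibly infinite computation `T`. -/
inductive SubComp : FT σ → PT σ → Prop
  | leaf {c : σ} {T : PT σ} : T.label [] = some c → SubComp (.leaf c) T
  | one {c : σ} {T : PT σ} {F : FT σ} : T.label [] = some c → T.pr [] = none →
      (T.label [false]).isSome → T.label [true] = none →
      SubComp F (T.child false) → SubComp (.one c F) T
  | two {p q : ℝ} {c : σ} {T : PT σ} {F G : FT σ} : T.label [] = some c →
      T.pr [] = some (p, q) → SubComp F (T.child false) → SubComp G (T.child true) →
      SubComp (.two p q c F G) T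

/-- The probability of observing `C` in a possibly infinite computation: the
supremum over all finite sub-computations. -/
noncomputable def PT.Pr (T : PT σ) (C : σ) : ℝ :=
  sSup {x : ℝ | ∃ F : FT σ, SubComp F T ∧ FT.Pr C F = x}

/-- The number of leaves equal to `C` in a possibly infinite computation. -/
noncomputable def PT.Nc (T : PT σ) (C : σ) : ℕ∞ :=
  sSup {n : ℕ∞ | ∃ F : FT σ, SubComp F T ∧ FT.Nc C F = n}

/-- The probability of observing any normal form in a possibly infinite computation. -/
noncomputable def PT.PrAny (NF : σ → Prop) (T : PT σ) : ℝ :=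
  sSup {x : ℝ | ∃ F : FT σ, SubComp F T ∧ FT.PrAny NF F = x}

/-- The number of normal-form leaves of a possibly infinite computation. -/
noncomputable def PT.NAny (NF : σ → Prop) (T : PT σ) : ℕ∞ :=
  sSup {n : ℕ∞ | ∃ F : FT σ, SubComp F T ∧ FT.NAny NF F = n}

/-!
Each side is a supremum over finite sub-computations, so it suffices to show that every finite
valid computation `F` from the root of a maximal computation is dominated, in value, by a finite
sub-computation of it. This is proved by induction on `F`, simultaneously for all sound and
maximal computation graphs `G`, because the induction hypothesis is applied to graphs built
from `G`. If `F` starts with a step `a → b`, the graph `G.ahead` contains a maximal computation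
from `b` that stays one step ahead of `G`: each move of `G` is joined with the pending step by
quasi-one-step confluence, and the only case without progress, a commutative step of `G`
overtaking the pending one, cannot repeat forever since `kdet` is strongly normalising. Its
finite sub-computations map back to sub-computations of `G` of the same value. If `F` starts
with a branching `a ⇝ (p, b₀), (q, b₁)`, the graph `G.fork` contains computations from `b₀` and
`b₁` whose finite sub-computations recombine, with weights `p` and `q`, into one of `G`; where
`G` branches differently, the recombination uses the diamond identity `pᵢ tᵢⱼ = sⱼ uᵢⱼ`.
-/

def BranchesTo (branch : σ → ℝ × σ → ℝ × σ → Prop) (a : σ) (p : Bool → ℝ) (e : Bool → σ) :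
    Prop :=
  branch a (p false, e false) (p true, e true)

structure BranchDiamond_s14 (branch : σ → ℝ × σ → ℝ × σ → Prop) (p : Bool → ℝ) (e : Bool → σ)
    (s : Bool → ℝ) (c : Bool → σ) where
  d : Bool → Bool → σ
  t : Bool → Bool → ℝ
  u : Bool → Bool → ℝ
  branchesTo_left : ∀ i, BranchesTo branch (e i) (t i) (d i)
  branchesTo_right : ∀ j, BranchesTo branch (c j) (fun i => u i j) (fun i => d i j)
  mul_eq : ∀ i j, p i * t i j = s j * u i j

/-- In the application `det` is `ndet ∪ kdet`. Only the third case of `join_det`, where the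
commutative step `a → c` overtakes `b`, makes no progress; hence `wf_kdet`. -/
structure IsQuasiConfluent (det kdet : σ → σ → Prop) (branch : σ → ℝ × σ → ℝ × σ → Prop) :
    Prop where
  join_det : ∀ {a b c}, det a b → det a c →
    b = c ∨ det b c ∨ (det c b ∧ kdet a c) ∨ ∃ d, det b d ∧ det c d
  join_det_branch : ∀ {a b p c}, det a b → BranchesTo branch a p c →
    ∃ d, BranchesTo branch b p d ∧ ∀ i, det (c i) (d i)
  join_branch : ∀ {a p e s c}, BranchesTo branch a p e → BranchesTo branch a s c →
    (p = s ∧ e = c) ∨ Nonempty (BranchDiamond_s14 branch p e s c)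
  prob_nonneg : ∀ {a p e}, BranchesTo branch a p e → ∀ i, 0 ≤ p i
  wf_kdet : WellFounded (flip kdet)

section OneStep

variable {ndet kdet : σ → σ → Prop} {branch : σ → ℝ × σ → ℝ × σ → Prop}

theorem join_det_of_oneStep
    (hkk : ∀ a b c, kdet a b → kdet a c → b = c ∨ ∃ d, kdet b d ∧ kdet c d)
    (hkn : ∀ a b c, kdet a b → ndet a c → ndet b c ∨ ∃ d, ndet b d ∧ kdet c d)
    (hnn : ∀ a b c, ndet a b → ndet a c → b = c ∨ ∃ d, ndet b d ∧ ndet c d) {a b c : σ}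
    (hab : ndet a b ∨ kdet a b) (hac : ndet a c ∨ kdet a c) :
    b = c ∨ (ndet b c ∨ kdet b c) ∨ ((ndet c b ∨ kdet c b) ∧ kdet a c) ∨
      ∃ d, (ndet b d ∨ kdet b d) ∧ (ndet c d ∨ kdet c d) := by
  rcases hab with hb | hb <;> rcases hac with hc | hc
  · rcases hnn a b c hb hc with h | ⟨d, h₁, h₂⟩
    · exact .inl h
    · exact .inr (.inr (.inr ⟨d, .inl h₁, .inl h₂⟩))
  · rcases hkn a c b hc hb with h | ⟨d, h₁, h₂⟩
    · exact .inr (.inr (.inl ⟨.inl h, hc⟩))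
    · exact .inr (.inr (.inr ⟨d, .inr h₂, .inl h₁⟩))
  · rcases hkn a b c hb hc with h | ⟨d, h₁, h₂⟩
    · exact .inr (.inl (.inl h))
    · exact .inr (.inr (.inr ⟨d, .inl h₁, .inr h₂⟩))
  · rcases hkk a b c hb hc with h | ⟨d, h₁, h₂⟩
    · exact .inl h
    · exact .inr (.inr (.inr ⟨d, .inr h₁, .inr h₂⟩))

theorem join_det_branch_of_oneStep
    (hkm : ∀ a b p c q d, kdet a b → branch a (p, c) (q, d) →
      ∃ c' d', branch b (p, c') (q, d') ∧ kdet c c' ∧ kdet d d')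
    (hnm : ∀ a b p c q d, ndet a b → branch a (p, c) (q, d) →
      ∃ c' d', branch b (p, c') (q, d') ∧ (ndet c c' ∨ kdet c c') ∧ (ndet d d' ∨ kdet d d'))
    {a b : σ} {p : Bool → ℝ} {c : Bool → σ} (hab : ndet a b ∨ kdet a b)
    (hb : BranchesTo branch a p c) :
    ∃ d, BranchesTo branch b p d ∧ ∀ i, ndet (c i) (d i) ∨ kdet (c i) (d i) := by
  obtain ⟨d₀, d₁, hb', h₀, h₁⟩ : ∃ d₀ d₁, branch b (p false, d₀) (p true, d₁) ∧
      (ndet (c false) d₀ ∨ kdet (c false) d₀) ∧ (ndet (c true) d₁ ∨ kdet (c true) d₁) := by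
    rcases hab with h | h
    · exact hnm _ _ _ _ _ _ h hb
    · obtain ⟨d₀, d₁, hb', h₀, h₁⟩ := hkm _ _ _ _ _ _ h hb
      exact ⟨d₀, d₁, hb', .inr h₀, .inr h₁⟩
  exact ⟨fun i => bif i then d₁ else d₀, hb', fun i => by cases i <;> assumption⟩

theorem join_branch_of_oneStep
    (hmm : ∀ a p₀ b₀ p₁ b₁ s₀ c₀ s₁ c₁,
      branch a (p₀, b₀) (p₁, b₁) → branch a (s₀, c₀) (s₁, c₁) →
      ((p₀, b₀) = (s₀, c₀) ∧ (p₁, b₁) = (s₁, c₁)) ∨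
      ∃ (d : Bool → Bool → σ) (t u : Bool → Bool → ℝ),
        branch b₀ (t false false, d false false) (t false true, d false true) ∧
        branch b₁ (t true false, d true false) (t true true, d true true) ∧
        branch c₀ (u false false, d false false) (u true false, d true false) ∧
        branch c₁ (u false true, d false true) (u true true, d true true) ∧
        ∀ i j, (bif i then p₁ else p₀) * t i j = (bif j then s₁ else s₀) * u i j)
    {a : σ} {p s : Bool → ℝ} {e c : Bool → σ} (hp : BranchesTo branch a p e)
    (hs : BranchesTo branch a s c) :
    (p = s ∧ e = c) ∨ Nonempty (BranchDiamond_s14 branch p e s c) := by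
  rcases hmm _ _ _ _ _ _ _ _ _ hp hs with ⟨h₀, h₁⟩ | ⟨d, t, u, h₀, h₁, h₂, h₃, h⟩
  · simp only [Prod.mk.injEq] at h₀ h₁
    exact .inl ⟨funext fun i => by cases i; exacts [h₀.1, h₁.1],
      funext fun i => by cases i; exacts [h₀.2, h₁.2]⟩
  · exact .inr ⟨⟨d, t, u, fun i => by cases i; exacts [h₀, h₁],
      fun j => by cases j; exacts [h₂, h₃],
      fun i j => by have := h i j; cases i <;> cases j <;> exact this⟩⟩

end OneStep

section Valuation

variable {M : Type} [AddCommMonoid M] [PartialOrder M]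

/-- `sc p` is how a branch probability `p` acts on values: multiplication for probabilities, the
identity for leaf counts. -/
structure IsValuation (NF : σ → Prop) (sc : ℝ → M → M) (wt : σ → M) : Prop where
  sc_add : ∀ a x y, sc a (x + y) = sc a x + sc a y
  sc_zero : ∀ a, sc a 0 = 0
  sc_sc : ∀ a b x, sc a (sc b x) = sc (a * b) x
  sc_mono : ∀ {a x y}, 0 ≤ a → x ≤ y → sc a x ≤ sc a y
  wt_nonneg : ∀ c, 0 ≤ wt c
  wt_eq_zero : ∀ {c}, ¬ NF c → wt c = 0

def FT.value (sc : ℝ → M → M) (wt : σ → M) : FT σ → M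
  | .leaf c => wt c
  | .one _ F => F.value sc wt
  | .two p q _ F₀ F₁ => sc p (F₀.value sc wt) + sc q (F₁.value sc wt)

variable {NF : σ → Prop} {sc : ℝ → M → M} {wt : σ → M}

theorem IsValuation.sc_nonneg (hV : IsValuation NF sc wt) {a : ℝ} {x : M} (ha : 0 ≤ a)
    (hx : 0 ≤ x) : 0 ≤ sc a x :=
  hV.sc_zero a ▸ hV.sc_mono ha hx

theorem IsValuation.interchange (hV : IsValuation NF sc wt) {q s : Bool → ℝ}
    {t u : Bool → Bool → ℝ} (h : ∀ i j, q i * t i j = s j * u i j) (v : Bool → Bool → M) :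
    sc (q false) (sc (t false false) (v false false) + sc (t false true) (v false true)) +
      sc (q true) (sc (t true false) (v true false) + sc (t true true) (v true true)) =
    sc (s false) (sc (u false false) (v false false) + sc (u true false) (v true false)) +
      sc (s true) (sc (u false true) (v false true) + sc (u true true) (v true true)) := by
  simp only [hV.sc_add, hV.sc_sc, h]
  abel

end Valuation

def FT.size : FT σ → ℕ
  | .leaf _ => 0
  | .one _ F => F.size + 1
  | .two _ _ _ F₀ F₁ => F₀.size + F₁.size + 1

inductive Move (X : Type) : Type
  | step (y : X)
  | split (p : Bool → ℝ) (y : Bool → X)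

namespace Move

variable {X Y : Type}

def map (f : X → Y) : Move X → Move Y
  | step y => step (f y)
  | split p y => split p (f ∘ y)

def Valid (det : σ → σ → Prop) (branch : σ → ℝ × σ → ℝ × σ → Prop) (conf : X → σ) (a : σ) :
    Move X → Prop
  | step y => det a (conf y)
  | split p y => BranchesTo branch a p (conf ∘ y)

theorem valid_map {det : σ → σ → Prop} {branch : σ → ℝ × σ → ℝ × σ → Prop} {conf : Y → σ}
    {f : X → Y} {a : σ} {m : Move X} :
    (m.map f).Valid det branch conf a ↔ m.Valid det branch (conf ∘ f) a := by
  cases m <;> rfl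

variable {M : Type} [AddCommMonoid M] {sc : ℝ → M → M}

def Propagates (D : X → M → Prop) (sc : ℝ → M → M) (P : M → Prop) : Move X → Prop
  | step y => ∀ v, D y v → P v
  | split p y => ∀ v₀ v₁, D (y false) v₀ → D (y true) v₁ → P (sc (p false) v₀ + sc (p true) v₁)

theorem Propagates.of_imp {D : X → M → Prop} {P P' : M → Prop} {m : Move X}
    (h : m.Propagates D sc P) (hP : ∀ v, P v → P' v) : m.Propagates D sc P' := by
  cases m with
  | step y => exact fun v hv => hP v (h v hv)
  | split p y => exact fun v₀ v₁ h₀ h₁ => hP _ (h v₀ v₁ h₀ h₁)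

theorem propagates_map {D : Y → M → Prop} {f : X → Y} {P : M → Prop} {m : Move X} :
    (m.map f).Propagates D sc P ↔ m.Propagates (fun x v => D (f x) v) sc P := by
  cases m <;> rfl

end Move

/-- A transition structure whose finite unfoldings (`SubComp`) play the role of finite
sub-computations. Valid maximal computations form one (`MaxComp.graph`), and so do the
computations built in the proof (`CompGraph.ahead`, `CompGraph.fork`). -/
structure CompGraph (σ X : Type) where
  conf : X → σ
  next : X → Move X → Prop

namespace CompGraph

variable {X Y : Type} (G : CompGraph σ X)

inductive SubComp : FT σ → X → Prop
  | leaf (x : X) : SubComp (.leaf (G.conf x)) x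
  | one {x y : X} {F : FT σ} : G.next x (.step y) → SubComp F y → SubComp (.one (G.conf x) F) x
  | two {x : X} {p : Bool → ℝ} {y : Bool → X} {F₀ F₁ : FT σ} : G.next x (.split p y) →
      SubComp F₀ (y false) → SubComp F₁ (y true) →
      SubComp (.two (p false) (p true) (G.conf x) F₀ F₁) x

def IsSound (det : σ → σ → Prop) (branch : σ → ℝ × σ → ℝ × σ → Prop) : Prop :=
  ∀ x m, G.next x m → m.Valid det branch G.conf (G.conf x)

def IsMaximal (det : σ → σ → Prop) (branch : σ → ℝ × σ → ℝ × σ → Prop) : Prop :=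
  ∀ x, ¬ IsNF det branch (G.conf x) → ∃ m, G.next x m

noncomputable def pick (x : X) : Move X :=
  @Classical.epsilon _ ⟨.step x⟩ (G.next x)

theorem next_pick {x : X} {m : Move X} (h : G.next x m) : G.next x (G.pick x) :=
  Classical.epsilon_spec ⟨m, h⟩

def extend (conf' : Y → σ) (next' : Y → Move (X ⊕ Y) → Prop) : CompGraph σ (X ⊕ Y) where
  conf := Sum.elim G.conf conf'
  next
    | .inl x, m => ∃ m₀, G.next x m₀ ∧ m = m₀.map .inl
    | .inr y, m => next' y m

variable {G} {conf' : Y → σ} {next' : Y → Move (X ⊕ Y) → Prop}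

theorem subComp_of_subComp_extend {F : FT σ} {x : X}
    (h : (G.extend conf' next').SubComp F (.inl x)) : G.SubComp F x := by
  generalize hz : (Sum.inl x : X ⊕ Y) = z at h
  induction h generalizing x with
  | leaf => subst hz; exact .leaf x
  | one hn _ ih =>
    subst hz
    obtain ⟨m₀, hm₀, he⟩ := hn
    cases m₀ with
    | step y₀ => cases he; exact .one hm₀ (ih rfl)
    | split => cases he
  | two hn _ _ ih₀ ih₁ =>
    subst hz
    obtain ⟨m₀, hm₀, he⟩ := hn
    cases m₀ with
    | step => cases he
    | split p y₀ => cases he; exact .two hm₀ (ih₀ rfl) (ih₁ rfl)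

variable {det : σ → σ → Prop} {branch : σ → ℝ × σ → ℝ × σ → Prop}

theorem IsSound.extend (hG : G.IsSound det branch)
    (h : ∀ y m, next' y m → m.Valid det branch (Sum.elim G.conf conf') (conf' y)) :
    (G.extend conf' next').IsSound det branch := by
  rintro (x | y) m hm
  · obtain ⟨m₀, hm₀, rfl⟩ := hm
    exact Move.valid_map.2 (hG x m₀ hm₀)
  · exact h y m hm

theorem IsMaximal.extend (hG : G.IsMaximal det branch)
    (h : ∀ y, ¬ IsNF det branch (conf' y) → ∃ m, next' y m) :
    (G.extend conf' next').IsMaximal det branch := by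
  rintro (x | y) hx
  · obtain ⟨m, hm⟩ := hG x hx
    exact ⟨_, m, hm, rfl⟩
  · exact h y hx

variable {M : Type} [AddCommMonoid M] [PartialOrder M] {sc : ℝ → M → M} {wt : σ → M}

variable (G sc wt) in
def Dominated (x : X) (v : M) : Prop :=
  ∃ K, G.SubComp K x ∧ v ≤ K.value sc wt

theorem Dominated.mono {x : X} {v w : M} (h : G.Dominated sc wt x w) (hvw : v ≤ w) :
    G.Dominated sc wt x v :=
  let ⟨K, hK, hw⟩ := h
  ⟨K, hK, hvw.trans hw⟩

theorem dominated_wt_conf (x : X) : G.Dominated sc wt x (wt (G.conf x)) :=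
  ⟨_, .leaf x, le_rfl⟩

theorem Dominated.of_step {x y : X} {v : M} (hn : G.next x (.step y))
    (h : G.Dominated sc wt y v) : G.Dominated sc wt x v :=
  let ⟨K, hK, hv⟩ := h
  ⟨.one _ K, .one hn hK, hv⟩

theorem Dominated.of_split [IsOrderedAddMonoid M] {NF : σ → Prop} (hV : IsValuation NF sc wt)
    {x : X} {p : Bool → ℝ} {y : Bool → X} {v₀ v₁ : M} (hn : G.next x (.split p y))
    (hp : ∀ i, 0 ≤ p i) (h₀ : G.Dominated sc wt (y false) v₀)
    (h₁ : G.Dominated sc wt (y true) v₁) :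
    G.Dominated sc wt x (sc (p false) v₀ + sc (p true) v₁) :=
  let ⟨K₀, hK₀, hv₀⟩ := h₀
  let ⟨K₁, hK₁, hv₁⟩ := h₁
  ⟨.two _ _ _ K₀ K₁, .two hn hK₀ hK₁,
    add_le_add (hV.sc_mono (hp false) hv₀) (hV.sc_mono (hp true) hv₁)⟩

theorem dominated_zero {NF : σ → Prop} (hV : IsValuation NF sc wt) (x : X) :
    G.Dominated sc wt x 0 :=
  (G.dominated_wt_conf x).mono (hV.wt_nonneg _)

theorem next_propagates [IsOrderedAddMonoid M] {kdet : σ → σ → Prop}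
    (hQ : IsQuasiConfluent det kdet branch)
    (hV : IsValuation (IsNF det branch) sc wt) (hG : G.IsSound det branch) {x : X}
    {m : Move X} (hm : G.next x m) :
    m.Propagates (G.Dominated sc wt) sc (G.Dominated sc wt x) := by
  cases m with
  | step y => exact fun _ => Dominated.of_step hm
  | split p y => exact fun _ _ => Dominated.of_split hV hm (hQ.prob_nonneg (hG x _ hm))

end CompGraph

/-- `⟨x, b, _⟩` is a computation from `b` that follows `G` from `x`, staying one step ahead. -/
structure Ahead {X : Type} (G : CompGraph σ X) (det : σ → σ → Prop) where
  src : X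
  tgt : σ
  isStep : det (G.conf src) tgt

namespace Ahead

variable {X : Type} (G : CompGraph σ X) (det : σ → σ → Prop)
  (branch : σ → ℝ × σ → ℝ × σ → Prop)

inductive Next : Ahead G det → Move (X ⊕ Ahead G det) → Prop
  | reach {s : Ahead G det} {x : X} {m : Move X} : G.next s.src (.step x) → G.conf x = s.tgt →
      G.next x m → Next s (m.map .inl)
  | catchUp {s : Ahead G det} {x : X} : G.next s.src (.step x) → det s.tgt (G.conf x) →
      Next s (.step (.inl x))
  | skip {s : Ahead G det} {x : X} {m} (h : det (G.conf x) s.tgt) : G.next s.src (.step x) →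
      Next ⟨x, s.tgt, h⟩ m → Next s m
  | join {s : Ahead G det} {x : X} {d : σ} (h : det (G.conf x) d) : G.next s.src (.step x) →
      det s.tgt d → Next s (.step (.inr ⟨x, d, h⟩))
  | split {s : Ahead G det} {p : Bool → ℝ} {y : Bool → X} {d : Bool → σ}
      (h : ∀ i, det (G.conf (y i)) (d i)) : G.next s.src (.split p y) →
      BranchesTo branch s.tgt p d → Next s (.split p fun i => .inr ⟨y i, d i, h i⟩)

end Ahead

def CompGraph.ahead {X : Type} (G : CompGraph σ X) (det : σ → σ → Prop)
    (branch : σ → ℝ × σ → ℝ × σ → Prop) : CompGraph σ (X ⊕ Ahead G det) :=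
  G.extend Ahead.tgt (Ahead.Next G det branch)

namespace Ahead

variable {X : Type} {G : CompGraph σ X} {det kdet : σ → σ → Prop}
  {branch : σ → ℝ × σ → ℝ × σ → Prop} {M : Type} [AddCommMonoid M] [PartialOrder M]
  {sc : ℝ → M → M} {wt : σ → M}

theorem Next.valid {s : Ahead G det} {m : Move (X ⊕ Ahead G det)} (hG : G.IsSound det branch)
    (h : Next G det branch s m) : m.Valid det branch (Sum.elim G.conf Ahead.tgt) s.tgt := by
  induction h with
  | reach _ hx hm => exact Move.valid_map.2 (hx ▸ hG _ _ hm)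
  | catchUp _ h | join _ _ h | split _ _ h => exact h
  | skip _ _ _ ih => exact ih

theorem exists_next (hQ : IsQuasiConfluent det kdet branch) (hG : G.IsSound det branch)
    (hmax : G.IsMaximal det branch) (s : Ahead G det) (hs : ¬ IsNF det branch s.tgt) :
    ∃ m, Next G det branch s m := by
  induction s using (InvImage.wf (fun s : Ahead G det => G.conf s.src) hQ.wf_kdet).induction
    with
  | _ s ih =>
  obtain ⟨m, hm⟩ := hmax s.src fun h => h.1 _ s.isStep
  cases m with
  | step x =>
    rcases hQ.join_det s.isStep (hG _ _ hm) with h | h | ⟨h, hk⟩ | ⟨d, h₁, h₂⟩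
    · obtain ⟨m', hm'⟩ := hmax x (h ▸ hs)
      exact ⟨_, .reach hm h.symm hm'⟩
    · exact ⟨_, .catchUp hm h⟩
    · obtain ⟨m', hm'⟩ := ih ⟨x, s.tgt, h⟩ hk hs
      exact ⟨_, .skip h hm hm'⟩
    · exact ⟨_, .join h₂ hm h₁⟩
  | split p y =>
    obtain ⟨d, hb, hd⟩ := hQ.join_det_branch s.isStep (hG _ _ hm)
    exact ⟨_, .split hd hm hb⟩

theorem dominated_tgt (hQ : IsQuasiConfluent det kdet branch)
    (hV : IsValuation (IsNF det branch) sc wt) (hG : G.IsSound det branch)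
    (hmax : G.IsMaximal det branch) (s : Ahead G det) : G.Dominated sc wt s.src (wt s.tgt) := by
  induction s using (InvImage.wf (fun s : Ahead G det => G.conf s.src) hQ.wf_kdet).induction
    with
  | _ s ih =>
  by_cases hs : IsNF det branch s.tgt
  swap
  · exact (G.dominated_wt_conf s.src).mono (hV.wt_eq_zero hs ▸ hV.wt_nonneg _)
  obtain ⟨m, hm⟩ := hmax s.src fun h => h.1 _ s.isStep
  cases m with
  | step x =>
    rcases hQ.join_det s.isStep (hG _ _ hm) with h | h | ⟨h, hk⟩ | ⟨d, h, -⟩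
    · exact h ▸ (G.dominated_wt_conf x).of_step hm
    · exact absurd h (hs.1 _)
    · exact (ih ⟨x, s.tgt, h⟩ hk).of_step hm
    · exact absurd h (hs.1 _)
  | split p y =>
    obtain ⟨d, hb, -⟩ := hQ.join_det_branch s.isStep (hG _ _ hm)
    exact absurd hb (hs.2 _ _)

theorem Next.propagates [IsOrderedAddMonoid M] (hQ : IsQuasiConfluent det kdet branch)
    (hV : IsValuation (IsNF det branch) sc wt) (hG : G.IsSound det branch) {s : Ahead G det}
    {m : Move (X ⊕ Ahead G det)} (h : Next G det branch s m) :
    m.Propagates (fun z v => G.Dominated sc wt (Sum.elim id Ahead.src z) v) sc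
      (G.Dominated sc wt s.src) := by
  induction h with
  | reach hs _ hm =>
    exact Move.propagates_map.2
      ((G.next_propagates hQ hV hG hm).of_imp fun _ => CompGraph.Dominated.of_step hs)
  | catchUp hs _ | join _ hs _ => exact fun _ => CompGraph.Dominated.of_step hs
  | skip _ hs _ ih => exact ih.of_imp fun _ => CompGraph.Dominated.of_step hs
  | split _ hs _ => exact fun _ _ => CompGraph.Dominated.of_split hV hs (hQ.prob_nonneg (hG _ _ hs))

end Ahead

namespace CompGraph

variable {X : Type} {G : CompGraph σ X} {det kdet : σ → σ → Prop}
  {branch : σ → ℝ × σ → ℝ × σ → Prop} {M : Type} [AddCommMonoid M] [PartialOrder M]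
  [IsOrderedAddMonoid M] {sc : ℝ → M → M} {wt : σ → M}

theorem IsSound.ahead (hG : G.IsSound det branch) : (G.ahead det branch).IsSound det branch :=
  hG.extend fun _ _ h => h.valid hG

theorem IsMaximal.ahead (hQ : IsQuasiConfluent det kdet branch) (hG : G.IsSound det branch)
    (hmax : G.IsMaximal det branch) : (G.ahead det branch).IsMaximal det branch :=
  hmax.extend (Ahead.exists_next hQ hG hmax)

theorem SubComp.dominated_of_ahead (hQ : IsQuasiConfluent det kdet branch)
    (hV : IsValuation (IsNF det branch) sc wt) (hG : G.IsSound det branch)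
    (hmax : G.IsMaximal det branch) {H : FT σ} {z : X ⊕ Ahead G det}
    (h : (G.ahead det branch).SubComp H z) :
    G.Dominated sc wt (Sum.elim id Ahead.src z) (H.value sc wt) := by
  have hprop : ∀ {z m}, (G.ahead det branch).next z m →
      m.Propagates (fun z v => G.Dominated sc wt (Sum.elim id Ahead.src z) v) sc
        (G.Dominated sc wt (Sum.elim id Ahead.src z)) := by
    rintro (x | s) m hm
    · obtain ⟨m₀, hm₀, rfl⟩ := hm
      exact Move.propagates_map.2 (G.next_propagates hQ hV hG hm₀)
    · exact Ahead.Next.propagates hQ hV hG hm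
  induction h with
  | leaf z =>
    cases z with
    | inl x => exact G.dominated_wt_conf x
    | inr s => exact Ahead.dominated_tgt hQ hV hG hmax s
  | one hn _ ih => exact hprop hn _ ih
  | two hn _ _ ih₀ ih₁ => exact hprop hn _ _ ih₀ ih₁

end CompGraph

/-- The sides `(f, false)` and `(f, true)` of a fork are computations from `f.tgt false` and
`f.tgt true` that follow `G` from `f.src`. Both sides use the move `G.pick f.src` and the same
chosen joining witnesses, so that their finite unfoldings recombine into one of `f.src`
(`Fork.pairDominated`). -/
structure Fork {X : Type} (G : CompGraph σ X) (branch : σ → ℝ × σ → ℝ × σ → Prop) where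
  src : X
  prob : Bool → ℝ
  tgt : Bool → σ
  isBranch : BranchesTo branch (G.conf src) prob tgt

namespace Fork

variable {X : Type} {G : CompGraph σ X} {det : σ → σ → Prop}
  {branch : σ → ℝ × σ → ℝ × σ → Prop}

noncomputable def stepTo (f : Fork G branch) {x : X}
    (hw : ∃ e, BranchesTo branch (G.conf x) f.prob e ∧ ∀ i, det (f.tgt i) (e i)) :
    Fork G branch :=
  ⟨x, f.prob, hw.choose, hw.choose_spec.1⟩

def diamondTo (f : Fork G branch) {s : Bool → ℝ} {y : Bool → X}
    (w : BranchDiamond_s14 branch f.prob f.tgt s (G.conf ∘ y)) (j : Bool) : Fork G branch :=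
  ⟨y j, fun i => w.u i j, fun i => w.d i j, w.branchesTo_right j⟩

variable (G det branch) in
inductive Next : Fork G branch × Bool → Move (X ⊕ Fork G branch × Bool) → Prop
  | same {f : Fork G branch} {i : Bool} {y : Bool → X} {m : Move X} :
      G.pick f.src = .split f.prob y → f.tgt = G.conf ∘ y → G.next (y i) m →
      Next (f, i) (m.map .inl)
  | step {f : Fork G branch} {i : Bool} {x : X}
      (hw : ∃ e, BranchesTo branch (G.conf x) f.prob e ∧ ∀ j, det (f.tgt j) (e j)) :
      G.pick f.src = .step x → Next (f, i) (.step (.inr (f.stepTo hw, i)))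
  | diamond {f : Fork G branch} {i : Bool} {s : Bool → ℝ} {y : Bool → X}
      (hw : Nonempty (BranchDiamond_s14 branch f.prob f.tgt s (G.conf ∘ y))) :
      G.pick f.src = .split s y → ¬ (f.prob = s ∧ f.tgt = G.conf ∘ y) →
      Next (f, i) (.split ((Classical.choice hw).t i)
        fun j => .inr (f.diamondTo (Classical.choice hw) j, i))

end Fork

def CompGraph.fork {X : Type} (G : CompGraph σ X) (det : σ → σ → Prop)
    (branch : σ → ℝ × σ → ℝ × σ → Prop) : CompGraph σ (X ⊕ Fork G branch × Bool) :=
  G.extend (fun fi => fi.1.tgt fi.2) (Fork.Next G det branch)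

namespace Fork

variable {X : Type} {G : CompGraph σ X} {det kdet : σ → σ → Prop}
  {branch : σ → ℝ × σ → ℝ × σ → Prop} {f : Fork G branch} {i : Bool}
  {m : Move (X ⊕ Fork G branch × Bool)} {M : Type} [AddCommMonoid M] [PartialOrder M]
  {sc : ℝ → M → M} {wt : σ → M}

theorem Next.valid (hG : G.IsSound det branch) {fi : Fork G branch × Bool}
    (h : Next G det branch fi m) :
    m.Valid det branch (Sum.elim G.conf fun fi => fi.1.tgt fi.2) (fi.1.tgt fi.2) := by
  cases h with
  | same _ hy hm => exact Move.valid_map.2 (congrFun hy _ ▸ hG _ _ hm)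
  | step hw _ => exact hw.choose_spec.2 _
  | diamond hw _ _ => exact (Classical.choice hw).branchesTo_left _

theorem next_pick_src (hmax : G.IsMaximal det branch) (f : Fork G branch) :
    G.next f.src (G.pick f.src) :=
  let ⟨_, hm⟩ := hmax f.src fun h => h.2 _ _ f.isBranch
  G.next_pick hm

theorem exists_next (hQ : IsQuasiConfluent det kdet branch) (hG : G.IsSound det branch)
    (hmax : G.IsMaximal det branch) (fi : Fork G branch × Bool)
    (hs : ¬ IsNF det branch (fi.1.tgt fi.2)) : ∃ m, Next G det branch fi m := by
  obtain ⟨f, i⟩ := fi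
  have hpick := next_pick_src hmax f
  cases hpk : G.pick f.src with
  | step x =>
    rw [hpk] at hpick
    exact ⟨_, .step (hQ.join_det_branch (hG _ _ hpick) f.isBranch) hpk⟩
  | split s y =>
    rw [hpk] at hpick
    by_cases hsame : f.prob = s ∧ f.tgt = G.conf ∘ y
    · obtain ⟨rfl, hy⟩ := hsame
      have hc : G.conf (y i) = f.tgt i := (congrFun hy i).symm
      obtain ⟨m', hm'⟩ := hmax (y i) (by rwa [hc])
      exact ⟨_, .same hpk hy hm'⟩
    · exact ⟨_, .diamond ((hQ.join_branch f.isBranch (hG _ _ hpick)).resolve_left hsame) hpk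
        hsame⟩

theorem Next.eq_of_same {y : Bool → X} (hp : G.pick f.src = .split f.prob y)
    (hy : f.tgt = G.conf ∘ y) (h : Next G det branch (f, i) m) :
    ∃ m₀, G.next (y i) m₀ ∧ m = m₀.map .inl := by
  cases h with
  | same hp' _ hm => cases hp.symm.trans hp'; exact ⟨_, hm, rfl⟩
  | step _ hp' => cases hp.symm.trans hp'
  | diamond _ hp' hne => cases hp.symm.trans hp'; exact absurd ⟨rfl, hy⟩ hne

theorem Next.eq_of_step {x : X} (hp : G.pick f.src = .step x)
    (hw : ∃ e, BranchesTo branch (G.conf x) f.prob e ∧ ∀ j, det (f.tgt j) (e j))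
    (h : Next G det branch (f, i) m) : m = .step (.inr (f.stepTo hw, i)) := by
  cases h with
  | same hp' _ _ => cases hp.symm.trans hp'
  | step _ hp' => cases hp.symm.trans hp'; rfl
  | diamond _ hp' _ => cases hp.symm.trans hp'

theorem Next.eq_of_diamond {s : Bool → ℝ} {y : Bool → X} (hp : G.pick f.src = .split s y)
    (hne : ¬ (f.prob = s ∧ f.tgt = G.conf ∘ y))
    (hw : Nonempty (BranchDiamond_s14 branch f.prob f.tgt s (G.conf ∘ y)))
    (h : Next G det branch (f, i) m) :
    m = .split ((Classical.choice hw).t i)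
      fun j => .inr (f.diamondTo (Classical.choice hw) j, i) := by
  cases h with
  | same hp' hy _ => cases hp.symm.trans hp'; exact absurd ⟨rfl, hy⟩ hne
  | step _ hp' => cases hp.symm.trans hp'
  | diamond _ hp' _ => cases hp.symm.trans hp'; rfl

theorem subComp_of_same {y : Bool → X} (hp : G.pick f.src = .split f.prob y)
    (hy : f.tgt = G.conf ∘ y) {H : FT σ} (h : (G.fork det branch).SubComp H (.inr (f, i))) :
    G.SubComp H (y i) := by
  have hc : G.conf (y i) = f.tgt i := (congrFun hy i).symm
  cases h with
  | leaf =>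
    have := CompGraph.SubComp.leaf (G := G) (y i)
    rwa [hc] at this
  | one hn hs =>
    obtain ⟨m₀, hm₀, he⟩ := Next.eq_of_same hp hy hn
    cases m₀ with
    | step y₀ =>
      cases he
      have := CompGraph.SubComp.one hm₀ (CompGraph.subComp_of_subComp_extend hs)
      rwa [hc] at this
    | split => cases he
  | two hn hs₀ hs₁ =>
    obtain ⟨m₀, hm₀, he⟩ := Next.eq_of_same hp hy hn
    cases m₀ with
    | step => cases he
    | split p y₀ =>
      cases he
      have := CompGraph.SubComp.two hm₀ (CompGraph.subComp_of_subComp_extend hs₀)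
        (CompGraph.subComp_of_subComp_extend hs₁)
      rwa [hc] at this

theorem subComp_of_step {x : X} (hp : G.pick f.src = .step x)
    (hw : ∃ e, BranchesTo branch (G.conf x) f.prob e ∧ ∀ j, det (f.tgt j) (e j)) {H : FT σ}
    (h : (G.fork det branch).SubComp H (.inr (f, i))) :
    H = .leaf (f.tgt i) ∨
      ∃ H', H = .one (f.tgt i) H' ∧ (G.fork det branch).SubComp H' (.inr (f.stepTo hw, i)) := by
  cases h with
  | leaf => exact .inl rfl
  | one hn hs => cases Next.eq_of_step hp hw hn; exact .inr ⟨_, rfl, hs⟩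
  | two hn => cases Next.eq_of_step hp hw hn

theorem subComp_of_diamond {s : Bool → ℝ} {y : Bool → X} (hp : G.pick f.src = .split s y)
    (hne : ¬ (f.prob = s ∧ f.tgt = G.conf ∘ y))
    (hw : Nonempty (BranchDiamond_s14 branch f.prob f.tgt s (G.conf ∘ y))) {H : FT σ}
    (h : (G.fork det branch).SubComp H (.inr (f, i))) :
    H = .leaf (f.tgt i) ∨ ∃ H₀ H₁,
      H = .two ((Classical.choice hw).t i false) ((Classical.choice hw).t i true) (f.tgt i) H₀ H₁ ∧
      (G.fork det branch).SubComp H₀ (.inr (f.diamondTo (Classical.choice hw) false, i)) ∧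
      (G.fork det branch).SubComp H₁ (.inr (f.diamondTo (Classical.choice hw) true, i)) := by
  cases h with
  | leaf => exact .inl rfl
  | one hn => cases Next.eq_of_diamond hp hne hw hn
  | two hn hs₀ hs₁ => cases Next.eq_of_diamond hp hne hw hn; exact .inr ⟨_, _, rfl, hs₀, hs₁⟩

variable (det sc wt) in
def PairDominated (f : Fork G branch) (H₀ H₁ : FT σ) : Prop :=
  (G.fork det branch).SubComp H₀ (.inr (f, false)) →
    (G.fork det branch).SubComp H₁ (.inr (f, true)) →
    G.Dominated sc wt f.src (sc (f.prob false) (H₀.value sc wt) + sc (f.prob true) (H₁.value sc wt))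

-- A leaf side has weight zero, since its configuration still reduces.
theorem exists_subComp_stepTo (hV : IsValuation (IsNF det branch) sc wt) {x : X}
    (hp : G.pick f.src = .step x)
    (hw : ∃ e, BranchesTo branch (G.conf x) f.prob e ∧ ∀ j, det (f.tgt j) (e j)) {H : FT σ}
    (h : (G.fork det branch).SubComp H (.inr (f, i))) :
    ∃ K, (G.fork det branch).SubComp K (.inr (f.stepTo hw, i)) ∧
      H.value sc wt ≤ K.value sc wt ∧ (K.size < H.size ∨ H = .leaf (f.tgt i) ∧ K.size = 0) := by
  rcases subComp_of_step hp hw h with rfl | ⟨H', rfl, hH'⟩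
  · refine ⟨.leaf _, .leaf _, ?_, .inr ⟨rfl, rfl⟩⟩
    show wt (f.tgt i) ≤ wt (hw.choose i)
    rw [hV.wt_eq_zero fun hnf => hnf.1 _ (hw.choose_spec.2 i)]
    exact hV.wt_nonneg _
  · exact ⟨H', hH', le_rfl, .inl (Nat.lt_succ_self _)⟩

variable [IsOrderedAddMonoid M]

theorem exists_subComp_diamondTo (hQ : IsQuasiConfluent det kdet branch)
    (hV : IsValuation (IsNF det branch) sc wt) {s : Bool → ℝ} {y : Bool → X}
    (hp : G.pick f.src = .split s y) (hne : ¬ (f.prob = s ∧ f.tgt = G.conf ∘ y))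
    (hw : Nonempty (BranchDiamond_s14 branch f.prob f.tgt s (G.conf ∘ y))) {H : FT σ}
    (h : (G.fork det branch).SubComp H (.inr (f, i))) :
    ∃ K₀ K₁, (G.fork det branch).SubComp K₀ (.inr (f.diamondTo (Classical.choice hw) false, i)) ∧
      (G.fork det branch).SubComp K₁ (.inr (f.diamondTo (Classical.choice hw) true, i)) ∧
      H.value sc wt ≤ sc ((Classical.choice hw).t i false) (K₀.value sc wt) +
        sc ((Classical.choice hw).t i true) (K₁.value sc wt) ∧
      (K₀.size + K₁.size < H.size ∨ H = .leaf (f.tgt i) ∧ K₀.size + K₁.size = 0) := by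
  have hb := (Classical.choice hw).branchesTo_left i
  rcases subComp_of_diamond hp hne hw h with rfl | ⟨H₀, H₁, rfl, h₀, h₁⟩
  · refine ⟨.leaf _, .leaf _, .leaf _, .leaf _, ?_, .inr ⟨rfl, rfl⟩⟩
    show wt (f.tgt i) ≤ _
    rw [hV.wt_eq_zero fun hnf => hnf.2 _ _ hb]
    exact add_nonneg (hV.sc_nonneg (hQ.prob_nonneg hb false) (hV.wt_nonneg _))
      (hV.sc_nonneg (hQ.prob_nonneg hb true) (hV.wt_nonneg _))
  · exact ⟨H₀, H₁, h₀, h₁, le_rfl, .inl (Nat.lt_succ_self _)⟩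

theorem pairDominated_of_step (hQ : IsQuasiConfluent det kdet branch)
    (hV : IsValuation (IsNF det branch) sc wt) (hG : G.IsSound det branch) {x : X}
    {H₀ H₁ : FT σ} (hp : G.pick f.src = .step x) (hx : G.next f.src (.step x))
    (ih : ∀ (f' : Fork G branch) (K₀ K₁ : FT σ), K₀.size + K₁.size < H₀.size + H₁.size →
      f'.PairDominated det sc wt K₀ K₁) :
    f.PairDominated det sc wt H₀ H₁ := by
  intro h₀ h₁
  have hw := hQ.join_det_branch (hG _ _ hx) f.isBranch
  have hnf : ∀ i, ¬ IsNF det branch (f.tgt i) := fun i hnf => hnf.1 _ (hw.choose_spec.2 i)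
  obtain ⟨K₀, hK₀, hv₀, hs₀⟩ := exists_subComp_stepTo hV hp hw h₀
  obtain ⟨K₁, hK₁, hv₁, hs₁⟩ := exists_subComp_stepTo hV hp hw h₁
  rcases Nat.eq_zero_or_pos (H₀.size + H₁.size) with hz | hpos
  · obtain ⟨rfl, -⟩ := hs₀.resolve_left (by omega)
    obtain ⟨rfl, -⟩ := hs₁.resolve_left (by omega)
    refine (CompGraph.dominated_zero hV _).mono (le_of_eq ?_)
    simp only [FT.value, hV.wt_eq_zero (hnf _), hV.sc_zero, add_zero]
  · have := hs₀.imp_right And.right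
    have := hs₁.imp_right And.right
    have hlt : K₀.size + K₁.size < H₀.size + H₁.size := by omega
    have hq := hQ.prob_nonneg f.isBranch
    exact ((ih _ K₀ K₁ hlt hK₀ hK₁).of_step hx).mono
      (add_le_add (hV.sc_mono (hq false) hv₀) (hV.sc_mono (hq true) hv₁))

theorem pairDominated_of_diamond (hQ : IsQuasiConfluent det kdet branch)
    (hV : IsValuation (IsNF det branch) sc wt) (hG : G.IsSound det branch) {s : Bool → ℝ}
    {y : Bool → X} {H₀ H₁ : FT σ} (hp : G.pick f.src = .split s y)
    (hs : G.next f.src (.split s y)) (hne : ¬ (f.prob = s ∧ f.tgt = G.conf ∘ y))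
    (ih : ∀ (f' : Fork G branch) (K₀ K₁ : FT σ), K₀.size + K₁.size < H₀.size + H₁.size →
      f'.PairDominated det sc wt K₀ K₁) :
    f.PairDominated det sc wt H₀ H₁ := by
  intro h₀ h₁
  have hw := (hQ.join_branch f.isBranch (hG _ _ hs)).resolve_left hne
  have hnf : ∀ i, ¬ IsNF det branch (f.tgt i) :=
    fun i hnf => hnf.2 _ _ ((Classical.choice hw).branchesTo_left i)
  obtain ⟨K₀₀, K₀₁, hK₀₀, hK₀₁, hv₀, hs₀⟩ := exists_subComp_diamondTo hQ hV hp hne hw h₀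
  obtain ⟨K₁₀, K₁₁, hK₁₀, hK₁₁, hv₁, hs₁⟩ := exists_subComp_diamondTo hQ hV hp hne hw h₁
  rcases Nat.eq_zero_or_pos (H₀.size + H₁.size) with hz | hpos
  · obtain ⟨rfl, -⟩ := hs₀.resolve_left (by omega)
    obtain ⟨rfl, -⟩ := hs₁.resolve_left (by omega)
    refine (CompGraph.dominated_zero hV _).mono (le_of_eq ?_)
    simp only [FT.value, hV.wt_eq_zero (hnf _), hV.sc_zero, add_zero]
  · have := hs₀.imp_right And.right
    have := hs₁.imp_right And.right
    have hlt : K₀₀.size + K₁₀.size < H₀.size + H₁.size ∧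
        K₀₁.size + K₁₁.size < H₀.size + H₁.size := by omega
    have hd₀ := ih _ K₀₀ K₁₀ hlt.1 hK₀₀ hK₁₀
    have hd₁ := ih _ K₀₁ K₁₁ hlt.2 hK₀₁ hK₁₁
    have hq := hQ.prob_nonneg f.isBranch
    refine (CompGraph.Dominated.of_split hV hs (hQ.prob_nonneg (hG _ _ hs)) hd₀ hd₁).mono ?_
    exact (add_le_add (hV.sc_mono (hq false) hv₀) (hV.sc_mono (hq true) hv₁)).trans_eq
      (hV.interchange (Classical.choice hw).mul_eq fun i j =>
        (bif i then bif j then K₁₁ else K₁₀ else bif j then K₀₁ else K₀₀).value sc wt)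

theorem pairDominated (hQ : IsQuasiConfluent det kdet branch)
    (hV : IsValuation (IsNF det branch) sc wt) (hG : G.IsSound det branch)
    (hmax : G.IsMaximal det branch) (f : Fork G branch) (H₀ H₁ : FT σ) :
    f.PairDominated det sc wt H₀ H₁ := by
  induction hN : H₀.size + H₁.size using Nat.strong_induction_on generalizing f H₀ H₁ with
  | _ N ih =>
  have ih' : ∀ (f' : Fork G branch) (K₀ K₁ : FT σ), K₀.size + K₁.size < H₀.size + H₁.size →
      f'.PairDominated det sc wt K₀ K₁ := fun f' K₀ K₁ hlt => ih _ (hN ▸ hlt) f' K₀ K₁ rfl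
  have hpick := next_pick_src hmax f
  cases hpk : G.pick f.src with
  | step x =>
    rw [hpk] at hpick
    exact pairDominated_of_step hQ hV hG hpk hpick ih'
  | split s y =>
    rw [hpk] at hpick
    by_cases hsame : f.prob = s ∧ f.tgt = G.conf ∘ y
    · obtain ⟨rfl, hy⟩ := hsame
      exact fun h₀ h₁ =>
        ⟨_, .two hpick (subComp_of_same hpk hy h₀) (subComp_of_same hpk hy h₁), le_rfl⟩
    · exact pairDominated_of_diamond hQ hV hG hpk hpick hsame ih'

end Fork

namespace CompGraph

variable {X : Type} {G : CompGraph σ X} {det kdet : σ → σ → Prop}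
  {branch : σ → ℝ × σ → ℝ × σ → Prop}

theorem IsSound.fork (hG : G.IsSound det branch) : (G.fork det branch).IsSound det branch :=
  hG.extend fun _ _ h => h.valid hG

theorem IsMaximal.fork (hQ : IsQuasiConfluent det kdet branch) (hG : G.IsSound det branch)
    (hmax : G.IsMaximal det branch) : (G.fork det branch).IsMaximal det branch :=
  hmax.extend (Fork.exists_next hQ hG hmax)

end CompGraph

theorem FT.Valid.dominated {det kdet : σ → σ → Prop} {branch : σ → ℝ × σ → ℝ × σ → Prop}
    {M : Type} [AddCommMonoid M] [PartialOrder M] [IsOrderedAddMonoid M] {sc : ℝ → M → M}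
    {wt : σ → M} (hQ : IsQuasiConfluent det kdet branch)
    (hV : IsValuation (IsNF det branch) sc wt) {F : FT σ} (hF : F.Valid det branch) :
    ∀ {X : Type} (G : CompGraph σ X), G.IsSound det branch → G.IsMaximal det branch →
      ∀ x, G.conf x = F.root → G.Dominated sc wt x (F.value sc wt) := by
  induction hF with
  | leaf c =>
    intro X G _ _ x (hx : G.conf x = c)
    exact hx ▸ G.dominated_wt_conf x
  | one hd _ ih =>
    intro X G hG hmax x hx
    obtain ⟨H, hH, hle⟩ := ih (G.ahead det branch) hG.ahead (hmax.ahead hQ hG)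
      (.inr ⟨x, _, by rw [hx]; exact hd⟩) rfl
    exact (hH.dominated_of_ahead hQ hV hG hmax).mono hle
  | @two p q c T₀ T₁ hb _ _ ih₀ ih₁ =>
    intro X G hG hmax x hx
    let f : Fork G branch := ⟨x, fun i => bif i then q else p,
      fun i => bif i then T₁.root else T₀.root, by rw [hx]; exact hb⟩
    obtain ⟨H₀, hH₀, hle₀⟩ :=
      ih₀ (G.fork det branch) hG.fork (hmax.fork hQ hG) (.inr (f, false)) rfl
    obtain ⟨H₁, hH₁, hle₁⟩ :=
      ih₁ (G.fork det branch) hG.fork (hmax.fork hQ hG) (.inr (f, true)) rfl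
    have hpq := hQ.prob_nonneg f.isBranch
    exact (Fork.pairDominated hQ hV hG hmax f H₀ H₁ hH₀ hH₁).mono
      (add_le_add (hV.sc_mono (hpq false) hle₀) (hV.sc_mono (hpq true) hle₁))

theorem PT.Valid.child {det : σ → σ → Prop} {branch : σ → ℝ × σ → ℝ × σ → Prop} {T : PT σ}
    (hT : T.Valid det branch) {b : Bool} (hb : (T.label [b]).isSome) :
    (T.child b).Valid det branch where
  root_isSome := hb
  none_child l := hT.none_child (b :: l)
  right_imp_left l := hT.right_imp_left (b :: l)
  det_step l := hT.det_step (b :: l)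
  branch_step l := hT.branch_step (b :: l)
  pr_of_two l := hT.pr_of_two (b :: l)

theorem PT.Maximal.child {NF : σ → Prop} {T : PT σ} (hT : T.Maximal NF) (b : Bool) :
    (T.child b).Maximal NF :=
  fun l => hT (b :: l)

theorem SubComp.label_nil {F : FT σ} {T : PT σ} (h : SubComp F T) : T.label [] = some F.root := by
  cases h <;> assumption

theorem SubComp.root_isSome {F : FT σ} {T : PT σ} (h : SubComp F T) : (T.label []).isSome := by
  rw [h.label_nil]; rfl

theorem SubComp.valid {det : σ → σ → Prop} {branch : σ → ℝ × σ → ℝ × σ → Prop} {F : FT σ}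
    {T : PT σ} (h : SubComp F T) : T.Valid det branch → F.Valid det branch := by
  induction h with
  | leaf => exact fun _ => .leaf _
  | one h₁ _ h₃ h₄ h₅ ih =>
    exact fun hT => .one (hT.det_step [] _ _ h₁ h₅.label_nil h₄).2 (ih (hT.child h₃))
  | two h₁ h₂ h₃ h₄ ih₀ ih₁ =>
    intro hT
    obtain ⟨p, q, d, e, hpq, hd, he, hb⟩ := hT.branch_step [] _ h₁ (by rw [h₂]; rfl)
    rw [h₂, Option.some.injEq, Prod.mk.injEq] at hpq
    obtain ⟨rfl, rfl⟩ := hpq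
    obtain rfl := Option.some.inj (hd.symm.trans h₃.label_nil)
    obtain rfl := Option.some.inj (he.symm.trans h₄.label_nil)
    exact .two hb (ih₀ (hT.child h₃.root_isSome)) (ih₁ (hT.child h₄.root_isSome))

abbrev MaxComp (det : σ → σ → Prop) (branch : σ → ℝ × σ → ℝ × σ → Prop) : Type :=
  {T : PT σ // T.Valid det branch ∧ T.Maximal (IsNF det branch)}

namespace MaxComp

variable {det : σ → σ → Prop} {branch : σ → ℝ × σ → ℝ × σ → Prop}

def root (T : MaxComp det branch) : σ :=
  (T.1.label []).get T.2.1.root_isSome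

theorem label_nil (T : MaxComp det branch) : T.1.label [] = some T.root :=
  (Option.some_get _).symm

theorem root_eq {T : MaxComp det branch} {c : σ} (h : T.1.label [] = some c) : T.root = c :=
  Option.some.inj (T.label_nil.symm.trans h)

variable (det branch) in
inductive Next : MaxComp det branch → Move (MaxComp det branch) → Prop
  | step {T : MaxComp det branch}
      (h : (T.1.child false).Valid det branch ∧ (T.1.child false).Maximal (IsNF det branch)) :
      T.1.pr [] = none → T.1.label [true] = none → Next T (.step ⟨_, h⟩)
  | split {T : MaxComp det branch} {p q : ℝ}
      (h : ∀ i, (T.1.child i).Valid det branch ∧ (T.1.child i).Maximal (IsNF det branch)) :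
      T.1.pr [] = some (p, q) → Next T (.split (fun i => bif i then q else p) fun i => ⟨_, h i⟩)

variable (det branch) in
def graph : CompGraph σ (MaxComp det branch) :=
  ⟨root, Next det branch⟩

theorem graph_isSound : (graph det branch).IsSound det branch := by
  rintro T _ (⟨h, hpr, htrue⟩ | ⟨h, hpr⟩)
  · exact (T.2.1.det_step [] _ _ T.label_nil (label_nil ⟨_, h⟩) htrue).2
  · obtain ⟨p, q, d, e, hpq, hd, he, hb⟩ := T.2.1.branch_step [] _ T.label_nil (by rw [hpr]; rfl)
    rw [hpr, Option.some.injEq, Prod.mk.injEq] at hpq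
    obtain ⟨rfl, rfl⟩ := hpq
    show branch T.root (_, root ⟨_, h false⟩) (_, root ⟨_, h true⟩)
    rwa [root_eq (T := ⟨_, h false⟩) hd, root_eq (T := ⟨_, h true⟩) he]

theorem graph_isMaximal : (graph det branch).IsMaximal det branch := by
  intro T hT
  cases hpr : T.1.pr [] with
  | some pq =>
    obtain ⟨_, _, d, e, -, hd, he, -⟩ := T.2.1.branch_step [] _ T.label_nil (by rw [hpr]; rfl)
    have hc : ∀ i, (T.1.child i).Valid det branch ∧ (T.1.child i).Maximal (IsNF det branch) :=
      fun i => ⟨T.2.1.child (by cases i <;> simp_all), T.2.2.child i⟩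
    exact ⟨_, .split hc hpr⟩
  | none =>
    cases hf : T.1.label [false] with
    | none => exact absurd (T.2.2 [] _ T.label_nil hf) hT
    | some d =>
      have htrue : T.1.label [true] = none :=
        Option.not_isSome_iff_eq_none.mp fun hs => by simpa [hpr] using T.2.1.pr_of_two [] hs
      exact ⟨_, .step ⟨T.2.1.child (by rw [hf]; rfl), T.2.2.child false⟩ hpr htrue⟩

theorem subComp_of_subComp_graph {F : FT σ} {T : MaxComp det branch}
    (h : (graph det branch).SubComp F T) : SubComp F T.1 := by
  induction h with
  | leaf T => exact .leaf T.label_nil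
  | one hn _ ih =>
    cases hn with
    | step h hpr htrue => exact .one (label_nil _) hpr h.1.root_isSome htrue ih
  | two hn _ _ ih₀ ih₁ =>
    cases hn with
    | split h hpr => exact .two (label_nil _) hpr ih₀ ih₁

end MaxComp

theorem SubComp.exists_value_le {det kdet : σ → σ → Prop}
    {branch : σ → ℝ × σ → ℝ × σ → Prop} {M : Type} [AddCommMonoid M] [PartialOrder M]
    [IsOrderedAddMonoid M] {sc : ℝ → M → M} {wt : σ → M}
    (hQ : IsQuasiConfluent det kdet branch) (hV : IsValuation (IsNF det branch) sc wt)
    {F : FT σ} {T T' : PT σ} (hF : SubComp F T) (hT : T.Valid det branch)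
    (hT' : T'.Valid det branch ∧ T'.Maximal (IsNF det branch))
    (hroot : T.label [] = T'.label []) :
    ∃ G, SubComp G T' ∧ F.value sc wt ≤ G.value sc wt := by
  obtain ⟨G, hG, hle⟩ := (hF.valid hT).dominated hQ hV (MaxComp.graph det branch)
    MaxComp.graph_isSound MaxComp.graph_isMaximal ⟨T', hT'⟩
    (MaxComp.root_eq (hroot.symm.trans hF.label_nil))
  exact ⟨G, MaxComp.subComp_of_subComp_graph hG, hle⟩

theorem isValuation_real {NF P : σ → Prop} (hP : ∀ c, P c → NF c) :
    IsValuation NF (fun a x : ℝ => a * x) (fun c => if P c then 1 else 0) where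
  sc_add := mul_add
  sc_zero := mul_zero
  sc_sc a b x := (mul_assoc a b x).symm
  sc_mono ha h := mul_le_mul_of_nonneg_left h ha
  wt_nonneg c := by split_ifs <;> norm_num
  wt_eq_zero hc := if_neg fun h => hc (hP _ h)

theorem isValuation_enat {NF P : σ → Prop} (hP : ∀ c, P c → NF c) :
    IsValuation NF (fun (_ : ℝ) (x : ℕ∞) => x) (fun c => if P c then 1 else 0) where
  sc_add _ _ _ := rfl
  sc_zero _ := rfl
  sc_sc _ _ _ := rfl
  sc_mono _ h := h
  wt_nonneg _ := zero_le
  wt_eq_zero hc := if_neg fun h => hc (hP _ h)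

theorem FT.pr_eq_value (C : σ) (F : FT σ) :
    FT.Pr C F = F.value (fun a x => a * x) fun d => if d = C then 1 else 0 := by
  induction F <;> simp only [FT.Pr, FT.value, *]

theorem FT.nc_eq_value (C : σ) (F : FT σ) :
    FT.Nc C F = F.value (fun _ x => x) fun d => if d = C then 1 else 0 := by
  induction F <;> simp only [FT.Nc, FT.value, *]

theorem FT.prAny_eq_value (NF : σ → Prop) (F : FT σ) :
    FT.PrAny NF F = F.value (fun a x => a * x) fun d => if NF d then 1 else 0 := by
  induction F <;> simp only [FT.PrAny, FT.value, *]

theorem FT.nAny_eq_value (NF : σ → Prop) (F : FT σ) :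
    FT.NAny NF F = F.value (fun _ x => x) fun d => if NF d then 1 else 0 := by
  induction F <;> simp only [FT.NAny, FT.value, *]

theorem sSup_subComp_eq {det kdet : σ → σ → Prop} {branch : σ → ℝ × σ → ℝ × σ → Prop}
    {M : Type} [AddCommMonoid M] [ConditionallyCompleteLinearOrder M] [IsOrderedAddMonoid M]
    {sc : ℝ → M → M} {wt : σ → M} (hQ : IsQuasiConfluent det kdet branch)
    (hV : IsValuation (IsNF det branch) sc wt) {f : FT σ → M} (hf : ∀ F, f F = F.value sc wt)
    {T T' : PT σ} (hT : T.Valid det branch ∧ T.Maximal (IsNF det branch))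
    (hT' : T'.Valid det branch ∧ T'.Maximal (IsNF det branch))
    (hroot : T.label [] = T'.label []) :
    sSup {x | ∃ F, SubComp F T ∧ f F = x} = sSup {x | ∃ F, SubComp F T' ∧ f F = x} := by
  have dominated : ∀ {T T' : PT σ}, T.Valid det branch →
      T'.Valid det branch ∧ T'.Maximal (IsNF det branch) → T.label [] = T'.label [] →
      ∀ x ∈ {x | ∃ F, SubComp F T ∧ f F = x}, ∃ y ∈ {x | ∃ F, SubComp F T' ∧ f F = x}, x ≤ y := by
    rintro T T' hT hT' hroot _ ⟨F, hF, rfl⟩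
    obtain ⟨G, hG, hle⟩ := hF.exists_value_le hQ hV hT hT' hroot
    exact ⟨f G, ⟨G, hG, rfl⟩, by rwa [hf, hf]⟩
  exact csSup_eq_csSup_of_forall_exists_le (dominated hT.1 hT' hroot)
    (dominated hT'.1 hT hroot.symm)

/-- Strong confluence for possibly infinite maximal probabilistic computations over
an abstract rewriting system whose deterministic steps split into proper steps
`ndet` (the class `𝒩`) and commutative steps `kdet` (the class `𝒦`), satisfying
quasi-one-step confluence and strong normalization of the commutative sub-relation:
any two maximal computations with the same root have the same quantitative
behaviour. -/
theorem strong_confluence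
    (ndet kdet : σ → σ → Prop) (branch : σ → ℝ × σ → ℝ × σ → Prop)
    (hsum : ∀ a p b q c, branch a (p, b) (q, c) → 0 ≤ p ∧ 0 ≤ q ∧ p + q = 1)
    (hkk : ∀ a b c, kdet a b → kdet a c → b = c ∨ ∃ d, kdet b d ∧ kdet c d)
    (hkn : ∀ a b c, kdet a b → ndet a c → ndet b c ∨ ∃ d, ndet b d ∧ kdet c d)
    (hkm : ∀ a b p c q d, kdet a b → branch a (p, c) (q, d) →
      ∃ c' d', branch b (p, c') (q, d') ∧ kdet c c' ∧ kdet d d')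
    (hnn : ∀ a b c, ndet a b → ndet a c → b = c ∨ ∃ d, ndet b d ∧ ndet c d)
    (hnm : ∀ a b p c q d, ndet a b → branch a (p, c) (q, d) →
      ∃ c' d', branch b (p, c') (q, d') ∧ (ndet c c' ∨ kdet c c') ∧
        (ndet d d' ∨ kdet d d'))
    (hmm : ∀ a p₀ b₀ p₁ b₁ s₀ c₀ s₁ c₁,
      branch a (p₀, b₀) (p₁, b₁) → branch a (s₀, c₀) (s₁, c₁) →
      ((p₀, b₀) = (s₀, c₀) ∧ (p₁, b₁) = (s₁, c₁)) ∨
      ∃ (d : Bool → Bool → σ) (t u : Bool → Bool → ℝ),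
        branch b₀ (t false false, d false false) (t false true, d false true) ∧
        branch b₁ (t true false, d true false) (t true true, d true true) ∧
        branch c₀ (u false false, d false false) (u true false, d true false) ∧
        branch c₁ (u false true, d false true) (u true true, d true true) ∧
        ∀ i j, (bif i then p₁ else p₀) * t i j = (bif j then s₁ else s₀) * u i j)
    (hsn : ¬ ∃ f : ℕ → σ, ∀ n : ℕ, kdet (f n) (f (n + 1)))
    (T T' : PT σ)
    (hv : T.Valid (fun a b => ndet a b ∨ kdet a b) branch)
    (hv' : T'.Valid (fun a b => ndet a b ∨ kdet a b) branch)
    (hm : T.Maximal (IsNF (fun a b => ndet a b ∨ kdet a b) branch))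
    (hm' : T'.Maximal (IsNF (fun a b => ndet a b ∨ kdet a b) branch))
    (hroot : T.label [] = T'.label []) :
    (∀ C, IsNF (fun a b => ndet a b ∨ kdet a b) branch C →
      T.Pr C = T'.Pr C ∧ T.Nc C = T'.Nc C) ∧
    T.PrAny (IsNF (fun a b => ndet a b ∨ kdet a b) branch)
      = T'.PrAny (IsNF (fun a b => ndet a b ∨ kdet a b) branch) ∧
    T.NAny (IsNF (fun a b => ndet a b ∨ kdet a b) branch)
      = T'.NAny (IsNF (fun a b => ndet a b ∨ kdet a b) branch) := by
  have hQ : IsQuasiConfluent (fun a b => ndet a b ∨ kdet a b) kdet branch :=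
    { join_det := join_det_of_oneStep hkk hkn hnn
      join_det_branch := join_det_branch_of_oneStep hkm hnm
      join_branch := join_branch_of_oneStep hmm
      prob_nonneg := fun hb i => by
        cases i
        exacts [(hsum _ _ _ _ _ hb).1, (hsum _ _ _ _ _ hb).2.1]
      wf_kdet := wellFounded_iff_isEmpty_descending_chain.2 ⟨fun ⟨f, hf⟩ => hsn ⟨f, hf⟩⟩ }
  refine ⟨fun C hC => ⟨?_, ?_⟩, ?_, ?_⟩
  · exact sSup_subComp_eq hQ (isValuation_real fun c (h : c = C) => h ▸ hC) (FT.pr_eq_value C)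
      ⟨hv, hm⟩ ⟨hv', hm'⟩ hroot
  · exact sSup_subComp_eq hQ (isValuation_enat fun c (h : c = C) => h ▸ hC) (FT.nc_eq_value C)
      ⟨hv, hm⟩ ⟨hv', hm'⟩ hroot
  · exact sSup_subComp_eq hQ (isValuation_real fun _ h => h) (FT.prAny_eq_value _)
      ⟨hv, hm⟩ ⟨hv', hm'⟩ hroot
  · exact sSup_subComp_eq hQ (isValuation_enat fun _ h => h) (FT.nAny_eq_value _)
      ⟨hv, hm⟩ ⟨hv', hm'⟩ hroot
end
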